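/- Let λ₁, ..., λₙ be distinct reals and λ₀ ∈ ℝ. The weight function J_{λ₀}(t) = Σ_{0≤i≤n, λᵢ<t} Res_{z=λᵢ}(−(z−t)^{2n−1}/((z−λ₀)∏_{k=1}^n(z−λ_k)²)) is non-negative for all t ∈ ℝ. -/

import Mathlib

/-!
Write `F(y) = (y - t)^(2n-1)` and `ω(z) = (z - λ₀) ∏ₖ (z - λₖ)²`. The sum of the residues of
`-F/ω` at all of its poles is a divided difference of `-F` over the nodes `λ₀, λ₁, λ₁, …, λₙ, λₙ`,
and it vanishes because `deg F` is less than the order `2n` of that divided difference. Hence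
`J(t)` equals the divided difference of the truncated power `y ↦ (y - t)₊^(2n-1)`, i.e. a
B-spline, and B-splines are non-negative by the Cox–de Boor recurrence. To avoid confluent
divided differences, each double node `λₖ` is split into `λₖ, λₖ + ε`: for small `ε > 0` the
divided difference over the `2n + 1` distinct nodes is non-negative, and as `ε → 0⁺` the two
terms coming from `λₖ` and `λₖ + ε` form a difference quotient converging to the residue at the
double pole `λₖ`.
-/

open Finset Filter Topology Asymptotics

noncomputable def divDiff (s : Finset ℝ) (f : ℝ → ℝ) : ℝ :=
  ∑ x ∈ s, f x / ∏ y ∈ s.erase x, (x - y)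

noncomputable def truncPow (t : ℝ) (k : ℕ) (y : ℝ) : ℝ := if t ≤ y then (y - t) ^ k else 0

section DividedDifferences

variable {s : Finset ℝ}

theorem divDiff_congr {f g : ℝ → ℝ} (h : ∀ x ∈ s, f x = g x) : divDiff s f = divDiff s g :=
  sum_congr rfl fun x hx => by rw [h x hx]

theorem divDiff_sub (f g : ℝ → ℝ) :
    divDiff s (fun x => f x - g x) = divDiff s f - divDiff s g := by
  simp only [divDiff, sub_div, sum_sub_distrib]

theorem divDiff_singleton (a : ℝ) (f : ℝ → ℝ) : divDiff {a} f = f a := by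
  simp [divDiff]

theorem divDiff_pair {a b : ℝ} (hab : a ≠ b) (f : ℝ → ℝ) :
    divDiff {a, b} f = (f b - f a) / (b - a) := by
  have hba : b - a ≠ 0 := sub_ne_zero.2 hab.symm
  simp only [divDiff, sum_pair hab, erase_insert_eq_erase, mem_singleton, hab, not_false_eq_true,
    erase_eq_of_notMem, prod_singleton, erase_insert_of_ne hab, erase_singleton, insert_empty_eq]
  field_simp
  ring

theorem divDiff_sub_mul {a : ℝ} (ha : a ∈ s) (t : ℝ) (g : ℝ → ℝ) :
    divDiff s (fun y => (y - t) * g y) = (a - t) * divDiff s g + divDiff (s.erase a) g := by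
  have hcancel : ∀ x ∈ s.erase a, (x - a) * g x / ∏ y ∈ s.erase x, (x - y)
      = g x / ∏ y ∈ (s.erase a).erase x, (x - y) := by
    intro x hx
    have hxa : x - a ≠ 0 := sub_ne_zero.2 (ne_of_mem_erase hx)
    rw [← mul_prod_erase (s.erase x) (fun y => x - y)
      (mem_erase.2 ⟨(ne_of_mem_erase hx).symm, ha⟩), erase_right_comm, mul_div_mul_left _ _ hxa]
  calc divDiff s (fun y => (y - t) * g y)
      = ∑ x ∈ s, ((a - t) * (g x / ∏ y ∈ s.erase x, (x - y))
          + (x - a) * g x / ∏ y ∈ s.erase x, (x - y)) :=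
        sum_congr rfl fun x _ => by ring
    _ = (a - t) * divDiff s g + divDiff (s.erase a) g := by
        rw [sum_add_distrib, ← mul_sum, ← add_sum_erase s (fun x => (x - a) * g x / _) ha,
          sub_self, zero_mul, zero_div, zero_add, sum_congr rfl hcancel]
        rfl

theorem sub_mul_divDiff {a b : ℝ} (ha : a ∈ s) (hb : b ∈ s) (f : ℝ → ℝ) :
    (b - a) * divDiff s f = divDiff (s.erase a) f - divDiff (s.erase b) f := by
  linear_combination (divDiff_sub_mul hb 0 f).symm.trans (divDiff_sub_mul ha 0 f)

theorem divDiff_const (hs : 2 ≤ s.card) (c : ℝ) : divDiff s (fun _ => c) = 0 := by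
  suffices h : ∀ m (s : Finset ℝ), s.card = m + 1 →
      divDiff s (fun _ => c) = if m = 0 then c else 0 by
    rw [h (s.card - 1) s (by omega), if_neg (by omega)]
  intro m
  induction m with
  | zero =>
    intro s hs
    obtain ⟨a, rfl⟩ := card_eq_one.1 hs
    exact divDiff_singleton a _
  | succ m ih =>
    intro s hs
    obtain ⟨a, ha, b, hb, hab⟩ := one_lt_card.1 (by omega : 1 < s.card)
    have hrec := sub_mul_divDiff ha hb (fun _ => c)
    rw [ih (s.erase a) (by rw [card_erase_of_mem ha]; omega),
      ih (s.erase b) (by rw [card_erase_of_mem hb]; omega), sub_self] at hrec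
    rw [if_neg m.succ_ne_zero]
    exact (mul_eq_zero.1 hrec).resolve_left (sub_ne_zero.2 hab.symm)

theorem divDiff_sub_pow (t : ℝ) (d : ℕ) (hs : d + 2 ≤ s.card) :
    divDiff s (fun y => (y - t) ^ d) = 0 := by
  induction d generalizing s with
  | zero => simpa only [pow_zero] using divDiff_const hs 1
  | succ d ih =>
    obtain ⟨a, ha⟩ := card_pos.1 (by omega : 0 < s.card)
    simp only [pow_succ', divDiff_sub_mul ha, ih (by omega : d + 2 ≤ s.card),
      ih (by rw [card_erase_of_mem ha]; omega : d + 2 ≤ (s.erase a).card), mul_zero, add_zero]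

theorem divDiff_truncPow_nonneg (t : ℝ) (k : ℕ) (hs : s.card = k + 2) :
    0 ≤ divDiff s (truncPow t k) := by
  induction k generalizing s with
  | zero =>
    obtain ⟨a, b, hab, rfl⟩ := card_eq_two.1 hs
    wlog hlt : a < b generalizing a b
    · rw [pair_comm]
      exact this b a hab.symm (by rwa [pair_comm]) (lt_of_le_of_ne (not_lt.1 hlt) hab.symm)
    rw [divDiff_pair hab]
    refine div_nonneg ?_ (sub_nonneg.2 hlt.le)
    unfold truncPow
    split_ifs <;> norm_num
    linarith
  | succ k ih =>
    have hne : s.Nonempty := card_pos.1 (by omega)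
    have hab : s.min' hne < s.max' hne := min'_lt_max'_of_card s (by omega)
    set a := s.min' hne
    set b := s.max' hne
    have ha : a ∈ s := min'_mem s hne
    have hb : b ∈ s := max'_mem s hne
    rcases le_or_gt t a with hta | hat
    · rw [divDiff_congr (f := truncPow t (k + 1)) (g := fun y => (y - t) ^ (k + 1))
        (fun y hy => if_pos (hta.trans (min'_le s y hy))), divDiff_sub_pow t (k + 1) (by omega)]
    rcases lt_or_ge b t with hbt | htb
    · rw [divDiff_congr (f := truncPow t (k + 1)) (g := fun _ => 0)
        (fun y hy => if_neg (not_le.2 ((le_max' s y hy).trans_lt hbt))), divDiff_const (by omega)]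
    have hfactor : truncPow t (k + 1) = fun y => (y - t) * truncPow t k y := by
      funext y
      unfold truncPow
      split_ifs <;> ring
    have hA := ih (s := s.erase a) (by rw [card_erase_of_mem ha]; omega)
    have hB := ih (s := s.erase b) (by rw [card_erase_of_mem hb]; omega)
    -- Cox–de Boor: a convex combination of two B-splines of lower degree
    have hcox : (b - a) * ((a - t) * divDiff s (truncPow t k) + divDiff (s.erase a) (truncPow t k))
        = (b - t) * divDiff (s.erase a) (truncPow t k)
          + (t - a) * divDiff (s.erase b) (truncPow t k) := by
      linear_combination (a - t) * sub_mul_divDiff ha hb (truncPow t k)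
    rw [hfactor, divDiff_sub_mul ha, ← mul_nonneg_iff_of_pos_left (sub_pos.2 hab), hcox]
    exact add_nonneg (mul_nonneg (sub_nonneg.2 htb) hA) (mul_nonneg (sub_nonneg.2 hat.le) hB)

theorem divDiff_truncPow_lt_nonpos (t : ℝ) (p : ℕ) (hs : s.card = p + 2) :
    divDiff s (fun y => if y < t then (y - t) ^ p else 0) ≤ 0 := by
  have hsplit : (fun y => if y < t then (y - t) ^ p else 0)
      = fun y => (y - t) ^ p - truncPow t p y := by
    funext y
    unfold truncPow
    split_ifs <;> linarith
  rw [hsplit, divDiff_sub, divDiff_sub_pow t p hs.ge, zero_sub, neg_nonpos]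
  exact divDiff_truncPow_nonneg t p hs

end DividedDifferences

theorem prod_erase_sub_eq {s : Finset ℝ} {x : ℝ} (hx : x ∈ s) {R : ℝ → ℝ} (hR : Continuous R)
    (h : ∀ w, ∏ y ∈ s, (w - y) = (w - x) * R w) :
    ∏ y ∈ s.erase x, (x - y) = R x := by
  have : (fun w => ∏ y ∈ s.erase x, (w - y)) = R :=
    Continuous.ext_on (dense_compl_singleton x) (by fun_prop) hR fun w (hw : w ≠ x) =>
      mul_left_cancel₀ (sub_ne_zero.2 hw) ((mul_prod_erase s (fun y => w - y) hx).trans (h w))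
  exact congrFun this x

theorem tendsto_slope_snd_of_contDiffAt {Φ : ℝ × ℝ → ℝ} {c : ℝ} (hΦ : ContDiffAt ℝ 1 Φ (0, c)) :
    Tendsto (fun ε => (Φ (ε, c + ε) - Φ (ε, c)) / ε) (𝓝[≠] 0)
      (𝓝 (deriv (fun w => Φ (0, w)) c)) := by
  have hstrict := hΦ.hasStrictFDerivAt one_ne_zero
  set L := fderiv ℝ Φ (0, c)
  have hderiv : deriv (fun w => Φ (0, w)) c = L (0, 1) :=
    (hstrict.hasFDerivAt.comp_hasDerivAt c ((hasDerivAt_const c (0 : ℝ)).prodMk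
      (hasDerivAt_id c))).deriv
  -- strict differentiability, applied to the pairs of points `(ε, c + ε)` and `(ε, c)`
  have hpath : Tendsto (fun ε : ℝ => ((ε, c + ε), (ε, c))) (𝓝 0)
      (𝓝 (((0 : ℝ), c), ((0 : ℝ), c))) :=
    (by fun_prop : Continuous fun ε : ℝ => ((ε, c + ε), (ε, c))).tendsto' 0 _ (by simp)
  have ho : (fun ε : ℝ => Φ (ε, c + ε) - Φ (ε, c) - ε * L (0, 1)) =o[𝓝 0] fun ε => ε := by
    refine ((hstrict.isLittleO.comp_tendsto hpath).trans_isBigO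
      (isBigO_of_le (𝓝 (0 : ℝ)) (g := fun ε : ℝ => ε) fun ε => by simp)).congr_left fun ε => ?_
    have : ((ε, c + ε) - (ε, c) : ℝ × ℝ) = ε • ((0 : ℝ), (1 : ℝ)) := by ext <;> simp
    simp only [Function.comp_apply, this, map_smul, smul_eq_mul]
  have h := (ho.tendsto_div_nhds_zero.mono_left (nhdsWithin_le_nhds (s := {0}ᶜ))).add_const
    (L (0, 1))
  rw [zero_add] at h
  rw [hderiv]
  refine h.congr' ?_
  filter_upwards [self_mem_nhdsWithin] with ε (hε : ε ≠ 0)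
  field_simp
  ring

section PerturbedNodes

variable {n : ℕ} (lam : Fin n → ℝ) (lam0 : ℝ)

noncomputable def perturbedNodes (ε : ℝ) : Finset ℝ :=
  insert lam0 (univ.image lam ∪ univ.image fun k => lam k + ε)

def perturbedNodal (u : Finset (Fin n)) (ε w : ℝ) : ℝ :=
  (w - lam0) * ∏ k ∈ u, ((w - lam k) * (w - (lam k + ε)))

noncomputable def leftResidueSum (p : ℕ) (t : ℝ) : ℝ :=
  (if lam0 < t then -(lam0 - t) ^ p / ∏ k, (lam0 - lam k) ^ 2 else 0) +
    ∑ i ∈ univ.filter (fun i => lam i < t),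
      deriv (fun w : ℝ => -(w - t) ^ p / ((w - lam0) * ∏ k ∈ univ.erase i, (w - lam k) ^ 2))
        (lam i)

theorem eventually_perturbedNodes_separated :
    ∀ᶠ ε in 𝓝[>] (0 : ℝ), (∀ i j, lam i + ε ≠ lam j) ∧ ∀ j, lam j + ε ≠ lam0 := by
  have hne : ∀ c : ℝ, ∀ᶠ ε in 𝓝[>] (0 : ℝ), ε ≠ c := by
    intro c
    rcases eq_or_ne c 0 with rfl | hc
    · exact eventually_mem_nhdsWithin.mono fun ε (hε : 0 < ε) => hε.ne'
    · exact eventually_ne_nhdsWithin hc.symm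
  simp only [eventually_and, eventually_all]
  exact ⟨fun i j => (hne (lam j - lam i)).mono fun ε h h' => h (by linarith),
    fun j => (hne (lam0 - lam j)).mono fun ε h h' => h (by linarith)⟩

variable {lam lam0}

@[to_additive]
theorem prod_perturbedNodes {M : Type*} [CommMonoid M] (hdist : Function.Injective lam)
    (hlam0 : ∀ i, lam0 ≠ lam i) {ε : ℝ} (hε : ∀ i j, lam i + ε ≠ lam j)
    (hε0 : ∀ j, lam j + ε ≠ lam0) (φ : ℝ → M) :
    ∏ x ∈ perturbedNodes lam lam0 ε, φ x = φ lam0 * ∏ i, (φ (lam i) * φ (lam i + ε)) := by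
  have hnot : lam0 ∉ univ.image lam ∪ univ.image fun k => lam k + ε := by
    simp only [mem_union, mem_image, mem_univ, true_and, not_or, not_exists]
    exact ⟨fun i h => hlam0 i h.symm, hε0⟩
  have hdisj : Disjoint (univ.image lam) (univ.image fun k => lam k + ε) := by
    simp only [disjoint_left, mem_image, mem_univ, true_and, not_exists, forall_exists_index,
      forall_apply_eq_imp_iff]
    exact fun i j h => hε j i h
  rw [perturbedNodes, prod_insert hnot, prod_union hdisj, prod_image fun i _ j _ h => hdist h,
    prod_image fun i _ j _ h => hdist (add_right_cancel h), prod_mul_distrib]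

theorem card_perturbedNodes (hdist : Function.Injective lam)
    (hlam0 : ∀ i, lam0 ≠ lam i) {ε : ℝ} (hε : ∀ i j, lam i + ε ≠ lam j)
    (hε0 : ∀ j, lam j + ε ≠ lam0) : (perturbedNodes lam lam0 ε).card = 2 * n + 1 := by
  rw [card_eq_sum_ones, sum_perturbedNodes hdist hlam0 hε hε0 fun _ => 1]
  simp only [Nat.reduceAdd, sum_const, card_univ, Fintype.card_fin, smul_eq_mul]
  ring

theorem divDiff_perturbedNodes (hdist : Function.Injective lam)
    (hlam0 : ∀ i, lam0 ≠ lam i) {ε : ℝ} (hε : ∀ i j, lam i + ε ≠ lam j)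
    (hε0 : ∀ j, lam j + ε ≠ lam0) (f : ℝ → ℝ) :
    divDiff (perturbedNodes lam lam0 ε) f
      = f lam0 / ∏ k, ((lam0 - lam k) * (lam0 - (lam k + ε)))
        + ∑ i, (f (lam i + ε) / perturbedNodal lam lam0 (univ.erase i) ε (lam i + ε)
          - f (lam i) / perturbedNodal lam lam0 (univ.erase i) ε (lam i)) / ε := by
  set s := perturbedNodes lam lam0 ε
  have hnodal : ∀ w, ∏ y ∈ s, (w - y) = (w - lam0) * ∏ k, ((w - lam k) * (w - (lam k + ε))) :=
    fun w => prod_perturbedNodes hdist hlam0 hε hε0 (w - ·)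
  have hsplit : ∀ i w, ∏ y ∈ s, (w - y)
      = (w - lam i) * (w - (lam i + ε)) * perturbedNodal lam lam0 (univ.erase i) ε w := by
    intro i w
    rw [hnodal, ← mul_prod_erase univ _ (mem_univ i), perturbedNodal]
    ring
  have hcont : ∀ i, Continuous (perturbedNodal lam lam0 (univ.erase i) ε) := fun i => by
    unfold perturbedNodal
    fun_prop
  have h0 := prod_erase_sub_eq (s := s) (mem_insert_self _ _) (by fun_prop) hnodal
  have hlam : ∀ i, ∏ y ∈ s.erase (lam i), (lam i - y)
      = -ε * perturbedNodal lam lam0 (univ.erase i) ε (lam i) := by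
    intro i
    rw [prod_erase_sub_eq (by simp [s, perturbedNodes]) (by have := hcont i; fun_prop)
      fun w => (hsplit i w).trans (mul_assoc _ _ _)]
    ring
  have hlam_add : ∀ i, ∏ y ∈ s.erase (lam i + ε), (lam i + ε - y)
      = ε * perturbedNodal lam lam0 (univ.erase i) ε (lam i + ε) := by
    intro i
    rw [prod_erase_sub_eq (R := fun w => (w - lam i) * perturbedNodal lam lam0 (univ.erase i) ε w)
      (by simp [s, perturbedNodes]) (by have := hcont i; fun_prop)
      fun w => (hsplit i w).trans (by ring)]
    ring
  rw [divDiff, sum_perturbedNodes hdist hlam0 hε hε0, h0]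
  congr 1
  refine sum_congr rfl fun i _ => ?_
  rw [hlam, hlam_add]
  ring

theorem tendsto_perturbedNodal_slope (hdist : Function.Injective lam)
    (hlam0 : ∀ i, lam0 ≠ lam i) (t : ℝ) (p : ℕ) (i : Fin n) :
    Tendsto (fun ε => (-(lam i + ε - t) ^ p / perturbedNodal lam lam0 (univ.erase i) ε (lam i + ε)
        - -(lam i - t) ^ p / perturbedNodal lam lam0 (univ.erase i) ε (lam i)) / ε) (𝓝[>] 0)
      (𝓝 (deriv (fun w => -(w - t) ^ p / ((w - lam0) * ∏ k ∈ univ.erase i, (w - lam k) ^ 2))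
        (lam i))) := by
  set Φ : ℝ × ℝ → ℝ := fun q => -(q.2 - t) ^ p / perturbedNodal lam lam0 (univ.erase i) q.1 q.2
  have hΦ0 : (fun w => Φ (0, w))
      = fun w => -(w - t) ^ p / ((w - lam0) * ∏ k ∈ univ.erase i, (w - lam k) ^ 2) := by
    funext w
    simp only [Φ, perturbedNodal, add_zero, ← sq]
  have hden : perturbedNodal lam lam0 (univ.erase i) 0 (lam i) ≠ 0 := by
    refine mul_ne_zero (sub_ne_zero.2 (hlam0 i).symm) (prod_ne_zero_iff.2 fun k hk => ?_)
    have hik : lam i - lam k ≠ 0 := sub_ne_zero.2 (hdist.ne (ne_of_mem_erase hk).symm)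
    simpa [add_zero] using mul_ne_zero hik hik
  have hsmooth : ContDiffAt ℝ 1 Φ (0, lam i) := by
    refine ContDiffAt.div (by fun_prop) ?_ hden
    unfold perturbedNodal
    fun_prop
  rw [← hΦ0]
  exact (tendsto_slope_snd_of_contDiffAt hsmooth).mono_left
    (nhdsWithin_mono _ fun ε (hε : 0 < ε) => hε.ne')

theorem neg_divDiff_perturbedNodes_truncPow_lt (hdist : Function.Injective lam)
    (hlam0 : ∀ i, lam0 ≠ lam i) {ε : ℝ} (hε : ∀ i j, lam i + ε ≠ lam j)
    (hε0 : ∀ j, lam j + ε ≠ lam0) (hpos : 0 ≤ ε) {t : ℝ} (hbelow : ∀ i, lam i < t → lam i + ε < t)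
    (p : ℕ) :
    -divDiff (perturbedNodes lam lam0 ε) (fun y => if y < t then (y - t) ^ p else 0)
      = (if lam0 < t then -(lam0 - t) ^ p / ∏ k, ((lam0 - lam k) * (lam0 - (lam k + ε)))
          else 0)
        + ∑ i ∈ univ.filter (fun i => lam i < t),
          (-(lam i + ε - t) ^ p / perturbedNodal lam lam0 (univ.erase i) ε (lam i + ε)
            - -(lam i - t) ^ p / perturbedNodal lam lam0 (univ.erase i) ε (lam i)) / ε := by
  rw [divDiff_perturbedNodes hdist hlam0 hε hε0, neg_add, ← sum_neg_distrib, sum_filter]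
  congr 1
  · split_ifs <;> ring
  · refine sum_congr rfl fun i _ => ?_
    by_cases hi : lam i < t
    · rw [if_pos hi, if_pos hi, if_pos (hbelow i hi)]
      ring
    · rw [if_neg hi, if_neg hi, if_neg (by linarith)]
      ring

theorem tendsto_neg_divDiff_perturbedNodes (hdist : Function.Injective lam)
    (hlam0 : ∀ i, lam0 ≠ lam i) (t : ℝ) (p : ℕ) :
    Tendsto (fun ε => -divDiff (perturbedNodes lam lam0 ε)
        (fun y => if y < t then (y - t) ^ p else 0))
      (𝓝[>] 0) (𝓝 (leftResidueSum lam lam0 p t)) := by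
  have hlam0_lim : Tendsto
      (fun ε => if lam0 < t then -(lam0 - t) ^ p / ∏ k, ((lam0 - lam k) * (lam0 - (lam k + ε)))
        else 0) (𝓝 0) (𝓝 (if lam0 < t then -(lam0 - t) ^ p / ∏ k, (lam0 - lam k) ^ 2 else 0)) := by
    split_ifs
    · have hden := (by fun_prop : Continuous fun ε =>
        ∏ k, ((lam0 - lam k) * (lam0 - (lam k + ε)))).tendsto 0
      simp only [add_zero, ← sq] at hden
      exact tendsto_const_nhds.div hden
        (prod_ne_zero_iff.2 fun k _ => pow_ne_zero 2 (sub_ne_zero.2 (hlam0 k)))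
    · exact tendsto_const_nhds
  have hbelow : ∀ᶠ ε in 𝓝[>] (0 : ℝ), ∀ i, lam i < t → lam i + ε < t := by
    refine eventually_all.2 fun i => ?_
    by_cases hi : lam i < t
    · have h := ((by fun_prop : Continuous fun ε : ℝ => lam i + ε).tendsto' 0 (lam i)
        (add_zero _)).eventually_lt_const hi
      exact (h.filter_mono nhdsWithin_le_nhds).mono fun ε hε _ => hε
    · exact Eventually.of_forall fun ε h => absurd h hi
  refine Tendsto.congr' ?_ ((hlam0_lim.mono_left nhdsWithin_le_nhds).add
    (tendsto_finsetSum _ fun i _ => tendsto_perturbedNodal_slope hdist hlam0 t p i))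
  filter_upwards [self_mem_nhdsWithin, hbelow, eventually_perturbedNodes_separated lam lam0]
    with ε (hpos : 0 < ε) hbelow ⟨hε, hε0⟩
  exact (neg_divDiff_perturbedNodes_truncPow_lt hdist hlam0 hε hε0 hpos.le hbelow p).symm

end PerturbedNodes

/-- Non-negativity of the weight `J_{λ₀}` arising in the integral representation of Kraus
matrices.  The residue at the simple pole `λ₀` is `-(λ₀-t)^(2n-1)/p_Λ(λ₀)^2`; the residue at
the double pole `λᵢ` is the derivative at `λᵢ` of `w ↦ (w-λᵢ)^2 · T_{λ₀}(w,t)`. -/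
theorem stmt13 (n : ℕ) (hn : 2 ≤ n) (lam : Fin n → ℝ) (hdist : Function.Injective lam)
    (lam0 : ℝ) (hlam0 : ∀ i, lam0 ≠ lam i)
    (Jres0 : ℝ → ℝ)
    (hJres0 : ∀ t, Jres0 t = -(lam0 - t) ^ (2 * n - 1) / ∏ k, (lam0 - lam k) ^ 2)
    (Jres : Fin n → ℝ → ℝ)
    (hJres : ∀ i t, Jres i t =
      deriv (fun w : ℝ => -(w - t) ^ (2 * n - 1) /
        ((w - lam0) * ∏ k ∈ univ.erase i, (w - lam k) ^ 2)) (lam i))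
    (J : ℝ → ℝ)
    (hJ : ∀ t, J t = (if lam0 < t then Jres0 t else 0) +
      ∑ i ∈ univ.filter (fun i => lam i < t), Jres i t) :
    ∀ t, 0 ≤ J t := by
  intro t
  have hJt : J t = leftResidueSum lam lam0 (2 * n - 1) t := by
    simp only [hJ, hJres0, hJres, leftResidueSum]
  rw [hJt]
  refine ge_of_tendsto (tendsto_neg_divDiff_perturbedNodes hdist hlam0 t (2 * n - 1)) ?_
  filter_upwards [eventually_perturbedNodes_separated lam lam0] with ε ⟨hε, hε0⟩
  exact neg_nonneg.2 (divDiff_truncPow_lt_nonpos t _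
    (by rw [card_perturbedNodes hdist hlam0 hε hε0]; omega))
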